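/- arXiv:2306.12543 — 3 statements merged into one kernel-verified Lean document; each statement's English description precedes it below -/
import Mathlib

section
/- Let M be a matroid on ground set E and let N be a matroid whose ground set is the set of circuits of M. Assume that whenever C₁ and C₂ are circuits of M with |C₁ ∪ C₂| − r_M(C₁ ∪ C₂) = 2, every circuit C of M with C ⊆ C₁ ∪ C₂ satisfies C ∈ cl_N({C₁, C₂}). Then the function r : 2^E → ℤ defined, for all X ⊆ E, by r(X) = r_M(X) + r_N({C : C is a circuit of M with C ⊆ X}) is the rank function of a matroid L on E, and L is a rank-r_N(E(N)) lift of M. -/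
open Set Matroid
open scoped Matroid

namespace PaperLift

variable {α : Type} {β : Type}

/-- A circuit of a matroid: a minimal dependent set. -/
def Circuit (M : Matroid α) (C : Set α) : Prop :=
  M.Dep C ∧ ∀ D, D ⊂ C → M.Indep D

/-- The rank of a set in a matroid: the supremum of cardinalities of independent subsets. -/
noncomputable def rk (M : Matroid α) (X : Set α) : ℕ :=
  sSup {n | ∃ I, M.Indep I ∧ I ⊆ X ∧ I.ncard = n}

/-- The rank of a matroid. -/
noncomputable def rank (M : Matroid α) : ℕ := rk M M.E

/-- Deletion of a set from a matroid. -/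
def delete (M : Matroid α) (D : Set α) : Matroid α := M ↾ (M.E \ D)

/-- Contraction of a set in a matroid, defined by duality. -/
noncomputable def contract (M : Matroid α) (C : Set α) : Matroid α := ((M✶) ↾ (M.E \ C))✶

/-- A hyperplane: a maximal proper flat. -/
def Hyperplane (M : Matroid α) (H : Set α) : Prop :=
  M.IsFlat H ∧ H ≠ M.E ∧ ∀ F, M.IsFlat F → H ⊂ F → F = M.E

/-- A circuit-hyperplane: a circuit that is also a hyperplane. -/
def CircuitHyperplane (M : Matroid α) (C : Set α) : Prop :=
  Circuit M C ∧ Hyperplane M C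

/-- `L` is a lift of `M`: there is a matroid `K` on a ground set `E ∪ F`, with `F` disjoint
from `E = M.E`, such that `M = K / F` and `L = K \ F` (up to the canonical embedding). -/
def IsLiftOf (L M : Matroid α) : Prop :=
  L.E = M.E ∧ ∃ (β : Type) (K : Matroid (α ⊕ β)) (F : Set (α ⊕ β)),
    Disjoint (Sum.inl '' M.E) F ∧ K.E = Sum.inl '' M.E ∪ F ∧
    contract K F = M.map Sum.inl Sum.inl_injective.injOn ∧
    delete K F = L.map Sum.inl Sum.inl_injective.injOn

/-- `N`, a matroid whose ground set is the set of circuits of `M`, satisfies the lift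
condition for `M`. -/
def LiftCondition (M : Matroid α) (N : Matroid (Set α)) : Prop :=
  N.E = {C | Circuit M C} ∧
  ∀ C₁ C₂, Circuit M C₁ → Circuit M C₂ →
    (C₁ ∪ C₂).ncard = rk M (C₁ ∪ C₂) + 2 →
    ∀ C, Circuit M C → C ⊆ C₁ ∪ C₂ → C ∈ N.closure {C₁, C₂}

/-- `L` has the rank function of the lift `M^N` of `M` constructed from `N`. -/
def IsLiftMatroid (M : Matroid α) (N : Matroid (Set α)) (L : Matroid α) : Prop :=
  L.E = M.E ∧ ∀ X ⊆ M.E, rk L X = rk M X + rk N {C | Circuit M C ∧ C ⊆ X}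

/-- Matroid isomorphism: a bijection between ground sets preserving independence
in both directions. -/
def Iso (M : Matroid α) (N : Matroid β) : Prop :=
  ∃ e : α → β, InjOn e M.E ∧ e '' M.E = N.E ∧ ∀ I ⊆ M.E, (M.Indep I ↔ N.Indep (e '' I))

/-- Representability of a matroid over a field `F`. -/
def Representable (M : Matroid α) (F : Type) [Field F] : Prop :=
  ∃ (W : Type) (_ : AddCommGroup W) (_ : Module F W) (φ : α → W),
    ∀ I ⊆ M.E, (M.Indep I ↔ InjOn φ I ∧ LinearIndependent F (fun e : I => φ e))

/-- A rank-`r` matroid is sparse paving if every `r`-element subset of the ground set is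
either a base or a circuit-hyperplane. -/
def SparsePaving (M : Matroid α) : Prop :=
  ∀ S ⊆ M.E, S.ncard = rank M → (M.IsBase S ∨ CircuitHyperplane M S)

/-- A perfect collection of circuits. -/
def Perfect (M : Matroid α) (Cs : Set (Set α)) : Prop :=
  Cs.Finite ∧ (∀ C ∈ Cs, Circuit M C) ∧
  (⋃₀ Cs).ncard = rk M (⋃₀ Cs) + Cs.ncard ∧
  ∀ C ∈ Cs, ¬ C ⊆ ⋃₀ (Cs \ {C})

/-- A linear class of circuits. -/
def LinearClass (M : Matroid α) (𝒞 : Set (Set α)) : Prop :=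
  (∀ C ∈ 𝒞, Circuit M C) ∧
  ∀ C₁ ∈ 𝒞, ∀ C₂ ∈ 𝒞, (C₁ ∪ C₂).ncard = rk M (C₁ ∪ C₂) + 2 →
    ∀ C, Circuit M C → C ⊆ C₁ ∪ C₂ → C ∈ 𝒞

/-- The circulant sets `C_i ⊆ [2t]` from the construction of `K(r,t)`. -/
def Ci (r t i : ℕ) : Set ℕ :=
  (fun k => (k + 2 * (i - 1) - 1) % (2 * t) + 1) '' (Set.Icc 1 (r - 2))

/-- The family `𝒞'(r,t)`. -/
def CC' (r t : ℕ) : Set (Set ℕ) :=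
  (fun i => Ci r t i ∪ {2 * t + 1, 2 * t + 2}) '' (Set.Icc 1 t)

/-- The family `𝒞''(r,t)`. -/
def CC'' (r t : ℕ) : Set (Set ℕ) :=
  (fun i => Ci r t i ∪ Ci r t (i + 1)) '' (Set.Icc 1 (t - 1))

/-- `K` is the matroid `K(r,t)`: a rank-`r` matroid on `[2t+2]` in which every `r`-element
subset is a base or a circuit-hyperplane, whose circuit-hyperplanes are exactly the members
of `𝒞'(r,t) ∪ 𝒞''(r,t)`. -/
def IsKrt (r t : ℕ) (K : Matroid ℕ) : Prop :=
  K.E = Set.Icc 1 (2 * t + 2) ∧ rank K = r ∧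
  (∀ S ⊆ K.E, S.ncard = r → (K.IsBase S ∨ CircuitHyperplane K S)) ∧
  (∀ S, CircuitHyperplane K S ↔ S ∈ CC' r t ∪ CC'' r t)

/-- A group partition: a partition of the non-identity elements such that each part
together with the identity is a subgroup. -/
def GroupPartition (Γ : Type) [Group Γ] (𝒜 : Set (Set Γ)) : Prop :=
  (∀ A ∈ 𝒜, A.Nonempty) ∧ (⋃₀ 𝒜 = {(1 : Γ)}ᶜ) ∧
  (∀ A ∈ 𝒜, ∀ B ∈ 𝒜, A ≠ B → Disjoint A B) ∧
  (∀ A ∈ 𝒜, ∃ H : Subgroup Γ, (H : Set Γ) = insert 1 A)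

/-
The lift is `K ＼ F` for the matroid `K` on `E ⊔ F`, `F = E(N)`, with rank function
`r_K(X ⊔ W) = r_M(X) + r_N(W ∪ 𝒞(X))`, where `𝒞(X)` is the set of circuits of `M` inside `X`;
contracting `F` instead gives back `M`, because `r_K(X ⊔ F) - r_K(F) = r_M(X)`.

That `r_K` is a matroid rank function rests on one closure property: if circuits `C₁, C₂` of `M`
share `e`, then `C₂ ∈ cl_N({C₁} ∪ 𝒞((C₁ ∪ C₂) - e))`. This is proved by induction on `|C₁ ∪ C₂|`.
If `C₁ ∪ C₂` has nullity two, the lift condition applies to `C₁` and a circuit obtained by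
eliminating `e`; otherwise some circuit through `e` inside `C₁ ∪ C₂` has strictly smaller unions
with `C₁` and with `C₂`. Consequently, when `e ∈ cl_M(X)`, `𝒞(X + e)` is spanned in `N` by `𝒞(X)`
and a single circuit through `e`, which yields unit increase and submodularity of `r_K`.
-/

lemma circuit_iff_isCircuit {M : Matroid α} {C : Set α} : Circuit M C ↔ M.IsCircuit C :=
  isCircuit_iff_forall_ssubset.symm

section Rank

variable {M : Matroid α} {X Y I : Set α} {e : α}

lemma rk_eq_ncard_of_isBasis' [M.RankFinite] (hI : M.IsBasis' I X) : rk M X = I.ncard := by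
  have hle : ∀ n ∈ {n | ∃ J, M.Indep J ∧ J ⊆ X ∧ J.ncard = n}, n ≤ I.ncard := by
    rintro _ ⟨J, hJ, hJX, rfl⟩
    rw [← Nat.cast_le (α := ℕ∞), hJ.finite.cast_ncard_eq, hI.indep.finite.cast_ncard_eq,
      hI.encard_eq_eRk]
    exact hJ.encard_le_eRk_of_subset hJX
  exact le_antisymm (csSup_le ⟨0, ∅, M.empty_indep, empty_subset X, ncard_empty α⟩ hle)
    (le_csSup ⟨_, hle⟩ ⟨I, hI.indep, hI.subset, rfl⟩)

variable [M.RankFinite]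

lemma cast_rk : (rk M X : ℕ∞) = M.eRk X := by
  obtain ⟨I, hI⟩ := M.exists_isBasis' X
  rw [rk_eq_ncard_of_isBasis' hI, hI.indep.finite.cast_ncard_eq, hI.encard_eq_eRk]

lemma rk_mono (hXY : X ⊆ Y) : rk M X ≤ rk M Y := by
  simpa only [← cast_rk, Nat.cast_le] using M.eRk_mono hXY

lemma rk_submod (X Y : Set α) : rk M (X ∩ Y) + rk M (X ∪ Y) ≤ rk M X + rk M Y := by
  simpa only [← cast_rk, ← Nat.cast_add, Nat.cast_le] using M.eRk_submod X Y

lemma rk_insert_le_add_one (e : α) (X : Set α) : rk M (insert e X) ≤ rk M X + 1 := by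
  simpa only [← cast_rk, ← Nat.cast_add_one, Nat.cast_le] using M.eRk_insert_le_add_one e X

lemma rk_insert_of_notMem_closure (he : e ∈ M.E \ M.closure X) :
    rk M (insert e X) = rk M X + 1 := by
  simpa only [← cast_rk, ← Nat.cast_add_one, Nat.cast_inj] using eRk_insert_eq_add_one he

lemma rk_closure_eq (X : Set α) : rk M (M.closure X) = rk M X := by
  simpa only [← cast_rk, Nat.cast_inj] using M.eRk_closure_eq X

lemma rk_insert_of_mem_closure (he : e ∈ M.closure X) : rk M (insert e X) = rk M X := by
  rw [← rk_closure_eq, closure_insert_eq_of_mem_closure he, rk_closure_eq]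

lemma rk_empty : rk M ∅ = 0 := by
  simpa only [← cast_rk, Nat.cast_eq_zero] using M.eRk_empty

lemma rk_le_ncard (hX : X.Finite) : rk M X ≤ X.ncard := by
  simpa only [← cast_rk, ← hX.cast_ncard_eq, Nat.cast_le] using M.eRk_le_encard X

lemma indep_iff_rk_eq_ncard (hI : I.Finite) : M.Indep I ↔ rk M I = I.ncard := by
  rw [indep_iff_eRk_eq_encard_of_finite hI, ← cast_rk, ← hI.cast_ncard_eq, Nat.cast_inj]

lemma rk_insert_add_rk_le (hXY : X ⊆ Y) (e : α) :
    rk M (insert e Y) + rk M X ≤ rk M Y + rk M (insert e X) := by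
  have h := rk_submod (M := M) (insert e X) Y
  rw [insert_union, union_eq_right.2 hXY] at h
  have := rk_mono (M := M) (subset_inter (subset_insert e X) hXY)
  omega

end Rank

structure RankAxioms (E : Set α) (r : Set α → ℕ) : Prop where
  finite : E.Finite
  empty : r ∅ = 0
  le_insert : ∀ ⦃X e⦄, X ⊆ E → e ∈ E → r X ≤ r (insert e X)
  insert_le : ∀ ⦃X e⦄, X ⊆ E → e ∈ E → r (insert e X) ≤ r X + 1
  insert_submod : ∀ ⦃A B e⦄, B ⊆ A → A ⊆ E → e ∈ E →
    r (insert e A) + r B ≤ r A + r (insert e B)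

namespace RankAxioms

variable {E X Y I J : Set α} {r : Set α → ℕ}

lemma le_union (h : RankAxioms E r) (hX : X ⊆ E) (hY : Y ⊆ E) : r X ≤ r (X ∪ Y) := by
  refine Set.Finite.induction_on_subset (motive := fun Z _ ↦ r X ≤ r (X ∪ Z)) Y
    (h.finite.subset hY) (by rw [union_empty]) fun {a Z} haY hZY _ ih ↦ ?_
  rw [union_insert]
  exact ih.trans (h.le_insert (union_subset hX (hZY.trans hY)) (hY haY))

lemma union_le (h : RankAxioms E r) (hX : X ⊆ E) (hY : Y ⊆ E) : r (X ∪ Y) ≤ r X + Y.ncard := by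
  refine Set.Finite.induction_on_subset (motive := fun Z _ ↦ r (X ∪ Z) ≤ r X + Z.ncard) Y
    (h.finite.subset hY) (by simp) fun {a Z} haY hZY haZ ih ↦ ?_
  rw [union_insert, ncard_insert_of_notMem haZ (h.finite.subset (hZY.trans hY))]
  have := h.insert_le (union_subset hX (hZY.trans hY)) (hY haY)
  omega

lemma union_eq_of_forall_insert_eq (h : RankAxioms E r) (hX : X ⊆ E) (hY : Y ⊆ E)
    (hXY : ∀ e ∈ Y, r (insert e X) = r X) : r (X ∪ Y) = r X := by
  refine Set.Finite.induction_on_subset (motive := fun Z _ ↦ r (X ∪ Z) = r X) Y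
    (h.finite.subset hY) (by rw [union_empty]) fun {a Z} haY hZY _ ih ↦ ?_
  have hXZ : X ∪ Z ⊆ E := union_subset hX (hZY.trans hY)
  have := h.insert_submod subset_union_left hXZ (hY haY)
  have := h.le_insert hXZ (hY haY)
  rw [union_insert]
  have := hXY a haY
  omega

lemma insert_eq_of_ne_ncard (h : RankAxioms E r) (hI : I ⊆ E) (hrI : r I = I.ncard) {e : α}
    (he : e ∈ E) (heI : e ∉ I) (hne : r (insert e I) ≠ (insert e I).ncard) :
    r (insert e I) = r I := by
  have := h.le_insert hI he
  have := h.insert_le hI he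
  have := ncard_insert_of_notMem heI (h.finite.subset hI)
  omega

lemma indep_subset (h : RankAxioms E r) (hJ : J ⊆ E) (hrJ : r J = J.ncard) (hIJ : I ⊆ J) :
    I ⊆ E ∧ r I = I.ncard := by
  have hI := hIJ.trans hJ
  have h₁ := h.union_le (Y := J \ I) hI (sdiff_subset.trans hJ)
  have h₂ := h.union_le (empty_subset E) hI
  rw [union_sdiff_cancel hIJ] at h₁
  rw [empty_union, h.empty] at h₂
  have := ncard_sdiff_add_ncard_of_subset hIJ (h.finite.subset hJ)
  exact ⟨hI, by omega⟩

lemma indep_aug (h : RankAxioms E r) (hI : I ⊆ E ∧ r I = I.ncard) (hJ : J ⊆ E ∧ r J = J.ncard)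
    (hlt : I.ncard < J.ncard) :
    ∃ e ∈ J, e ∉ I ∧ insert e I ⊆ E ∧ r (insert e I) = (insert e I).ncard := by
  by_contra! hcon
  have hJI := h.union_eq_of_forall_insert_eq hI.1 hJ.1 fun e heJ ↦ by
    by_cases heI : e ∈ I
    · rw [insert_eq_of_mem heI]
    exact h.insert_eq_of_ne_ncard hI.1 hI.2 (hJ.1 heJ) heI
      (hcon e heJ heI (insert_subset (hJ.1 heJ) hI.1))
  have := h.le_union hJ.1 hI.1
  rw [union_comm] at this
  omega

noncomputable def matroid (h : RankAxioms E r) : Matroid α :=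
  (IndepMatroid.ofFinite h.finite (fun I ↦ I ⊆ E ∧ r I = I.ncard)
    ⟨empty_subset E, by rw [h.empty, ncard_empty]⟩
    (fun _ _ hJ hIJ ↦ h.indep_subset hJ.1 hJ.2 hIJ)
    (fun _ _ hI hJ hlt ↦ by simpa only [exists_prop, and_assoc] using h.indep_aug hI hJ hlt)
    fun _ hI ↦ hI.1).matroid

lemma matroid_indep_iff (h : RankAxioms E r) : h.matroid.Indep I ↔ I ⊆ E ∧ r I = I.ncard :=
  Iff.rfl

instance matroid_finite (h : RankAxioms E r) : h.matroid.Finite := ⟨h.finite⟩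

lemma rk_matroid (h : RankAxioms E r) (hX : X ⊆ E) : rk h.matroid X = r X := by
  obtain ⟨I, hI⟩ := h.matroid.exists_isBasis' X
  obtain ⟨hIE, hrI⟩ := h.matroid_indep_iff.1 hI.indep
  have hIX := h.union_eq_of_forall_insert_eq hIE hX fun e heX ↦ by
    by_cases heI : e ∈ I
    · rw [insert_eq_of_mem heI]
    exact h.insert_eq_of_ne_ncard hIE hrI (hX heX) heI fun hr ↦
      hI.insert_not_indep ⟨heX, heI⟩ (h.matroid_indep_iff.2 ⟨insert_subset (hX heX) hIE, hr⟩)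
  rw [union_eq_right.2 hI.subset] at hIX
  rw [rk_eq_ncard_of_isBasis' hI, hIX, hrI]

end RankAxioms

lemma contract_indep_iff_rk {K : Matroid β} [K.Finite] {F I : Set β} :
    (K ／ F).Indep I ↔ I ⊆ K.E \ F ∧ rk K (I ∪ F) = I.ncard + rk K F := by
  obtain ⟨J, hJ⟩ := K.exists_isBasis' F
  have hJF : rk K (I ∪ J) = rk K (I ∪ F) := by
    rw [← Nat.cast_inj (R := ℕ∞), cast_rk, cast_rk, union_comm, union_comm I,
      hJ.eRk_eq_eRk_union]
  rw [hJ.contract_indep_iff, rk_eq_ncard_of_isBasis' hJ, subset_sdiff, disjoint_comm]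
  refine ⟨fun ⟨hIJ, hIF⟩ ↦ ⟨⟨subset_union_left.trans hIJ.subset_ground, hIF⟩, ?_⟩,
    fun ⟨⟨hI, hIF⟩, hr⟩ ↦ ⟨?_, hIF⟩⟩
  · rw [← hJF, (indep_iff_rk_eq_ncard (K.set_finite _ hIJ.subset_ground)).1 hIJ,
      ncard_union_eq (hIF.mono_right hJ.subset)
        (K.set_finite I (subset_union_left.trans hIJ.subset_ground))
        (K.set_finite J hJ.indep.subset_ground)]
  · have hIJ : I ∪ J ⊆ K.E := union_subset hI hJ.indep.subset_ground
    rw [indep_iff_rk_eq_ncard (K.set_finite _ hIJ), hJF, hr, ncard_union_eq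
      (hIF.mono_right hJ.subset) (K.set_finite I hI) (K.set_finite J hJ.indep.subset_ground)]

lemma eq_map_of_comap_eq {M : Matroid α} {K : Matroid β} {f : α → β} (hf : Function.Injective f)
    (hK : K.E ⊆ range f) (h : K.comap f = M) : K = M.map f hf.injOn := by
  subst h
  exact (map_comap hK hf.injOn).symm

section Nullity

noncomputable def nullity (M : Matroid α) (X : Set α) : ℕ := X.ncard - rk M X

variable {M : Matroid α} [M.Finite] {X C C₁ C₂ : Set α} {e : α}

lemma rk_add_nullity (hX : X ⊆ M.E) : rk M X + nullity M X = X.ncard := by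
  have := rk_le_ncard (M := M) (M.set_finite X hX)
  unfold nullity
  omega

lemma dep_iff_nullity_pos (hX : X ⊆ M.E) : M.Dep X ↔ 0 < nullity M X := by
  rw [← not_indep_iff hX, indep_iff_rk_eq_ncard (M.set_finite X hX)]
  have := rk_add_nullity hX
  omega

lemma nullity_sdiff_singleton_add_one (hX : X ⊆ M.E) (heX : e ∈ X)
    (he : e ∈ M.closure (X \ {e})) : nullity M (X \ {e}) + 1 = nullity M X := by
  have hrk : rk M (X \ {e}) = rk M X := by
    rw [← rk_insert_of_mem_closure he, insert_sdiff_singleton, insert_eq_of_mem heX]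
  have := rk_add_nullity hX
  have := rk_add_nullity (X := X \ {e}) (sdiff_subset.trans hX)
  have := ncard_sdiff_singleton_add_one heX (M.set_finite X hX)
  omega

lemma two_le_nullity (hC₁ : M.IsCircuit C₁) (hC₂ : M.IsCircuit C₂) (hne : C₁ ≠ C₂)
    (h₁ : C₁ ⊆ X) (h₂ : C₂ ⊆ X) (hX : X ⊆ M.E) : 2 ≤ nullity M X := by
  obtain ⟨y, hy₂, hy₁⟩ : (C₂ \ C₁).Nonempty :=
    sdiff_nonempty.2 fun h ↦ hne (hC₂.eq_of_subset_isCircuit hC₁ h).symm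
  have hdep : M.Dep (X \ {y}) :=
    hC₁.dep.superset (subset_sdiff_singleton h₁ hy₁) (sdiff_subset.trans hX)
  have hy : y ∈ M.closure (X \ {y}) :=
    M.closure_subset_closure (sdiff_subset_sdiff_left h₂)
      (hC₂.mem_closure_sdiff_singleton_of_mem hy₂)
  have := nullity_sdiff_singleton_add_one hX (h₂ hy₂) hy
  have := (dep_iff_nullity_pos (sdiff_subset.trans hX)).1 hdep
  omega

lemma subset_union_of_nullity_eq_two (hC₁ : M.IsCircuit C₁) (hC₂ : M.IsCircuit C₂)
    (hne : C₁ ≠ C₂) (h₁ : C₁ ⊆ X) (h₂ : C₂ ⊆ X) (hX : X ⊆ M.E) (h2 : nullity M X = 2)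
    (hC : M.IsCircuit C) (hCX : C ⊆ X) : C ⊆ C₁ ∪ C₂ := by
  intro x hxC
  by_contra hx
  have hx' : x ∈ M.closure (X \ {x}) :=
    M.closure_subset_closure (sdiff_subset_sdiff_left hCX)
      (hC.mem_closure_sdiff_singleton_of_mem hxC)
  have := nullity_sdiff_singleton_add_one hX (hCX hxC) hx'
  have := two_le_nullity hC₁ hC₂ hne (subset_sdiff_singleton h₁ fun h ↦ hx (.inl h))
    (subset_sdiff_singleton h₂ fun h ↦ hx (.inr h)) (sdiff_subset.trans hX)
  omega

lemma exists_isCircuit_of_three_le_nullity (hC₁ : M.IsCircuit C₁) (hC₂ : M.IsCircuit C₂)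
    (hne : C₁ ≠ C₂) (he₁ : e ∈ C₁) (he₂ : e ∈ C₂) (h3 : 3 ≤ nullity M (C₁ ∪ C₂)) :
    ∃ C ⊆ C₁ ∪ C₂, M.IsCircuit C ∧ e ∈ C ∧ C₁ ∪ C ⊂ C₁ ∪ C₂ ∧ C ∪ C₂ ⊂ C₁ ∪ C₂ := by
  -- Removing `e` and some `a ∈ C₁ \ C₂` leaves a circuit `D`, which meets `C₂ \ C₁` in some `g`;
  -- strong elimination of `g` between `C₂` and `D` keeps `e` and avoids both `a` and `g`.
  set U := C₁ ∪ C₂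
  have hU : U ⊆ M.E := union_subset hC₁.subset_ground hC₂.subset_ground
  obtain ⟨a, ha₁, ha₂⟩ : (C₁ \ C₂).Nonempty :=
    sdiff_nonempty.2 fun h ↦ hne (hC₁.eq_of_subset_isCircuit hC₂ h)
  have hae : a ≠ e := by rintro rfl; exact ha₂ he₂
  have hUa := nullity_sdiff_singleton_add_one hU (.inl ha₁) <|
    M.closure_subset_closure (sdiff_subset_sdiff_left subset_union_left)
      (hC₁.mem_closure_sdiff_singleton_of_mem ha₁)
  have hC₂U : C₂ \ {e} ⊆ (U \ {a}) \ {e} := fun x hx ↦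
    ⟨⟨.inr hx.1, by rintro rfl; exact ha₂ hx.1⟩, hx.2⟩
  have hUae := nullity_sdiff_singleton_add_one (X := U \ {a}) (sdiff_subset.trans hU)
    ⟨.inr he₂, hae.symm⟩
    (M.closure_subset_closure hC₂U (hC₂.mem_closure_sdiff_singleton_of_mem he₂))
  obtain ⟨D, hDU, hD⟩ := ((dep_iff_nullity_pos (X := (U \ {a}) \ {e})
    ((sdiff_subset.trans sdiff_subset).trans hU)).2 (by omega)).exists_isCircuit_subset
  have heD : e ∉ D := fun h ↦ (hDU h).2 rfl
  have haD : a ∉ D := fun h ↦ (hDU h).1.2 rfl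
  obtain ⟨g, hgD, hg₁⟩ := not_subset.1 fun h ↦
    hD.not_indep (hC₁.ssubset_indep (ssubset_of_subset_not_subset h fun h' ↦ heD (h' he₁)))
  have hg₂ : g ∈ C₂ := ((hDU hgD).1.1).resolve_left hg₁
  obtain ⟨C, hCs, hC, heC⟩ := hC₂.strong_elimination hD hg₂ hgD he₂ heD
  have hCU : C ⊆ U := hCs.trans (sdiff_subset.trans (union_subset subset_union_right
    (hDU.trans (sdiff_subset.trans sdiff_subset))))
  refine ⟨C, hCU, hC, heC, ?_, ?_⟩
  · refine ssubset_of_subset_not_subset (union_subset subset_union_left hCU) fun h ↦ ?_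
    exact (h (.inr hg₂)).elim hg₁ fun hgC ↦ (hCs hgC).2 rfl
  · refine ssubset_of_subset_not_subset (union_subset hCU subset_union_right) fun h ↦ ?_
    exact (h (.inl ha₁)).elim (fun haC ↦ (hCs haC).1.elim ha₂ haD) ha₂

end Nullity

section LiftCondition

variable {M : Matroid α} {N : Matroid (Set α)} {X Y A B C₀ C₁ C₂ : Set α} {W WA WB : Set (Set α)}
  {e : α}

def circuitsIn (M : Matroid α) (X : Set α) : Set (Set α) := {C | M.IsCircuit C ∧ C ⊆ X}

lemma circuitsIn_mono (hXY : X ⊆ Y) : circuitsIn M X ⊆ circuitsIn M Y :=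
  fun _ hC ↦ ⟨hC.1, hC.2.trans hXY⟩

lemma circuitsIn_empty : circuitsIn M ∅ = ∅ :=
  eq_empty_of_forall_notMem fun _ hC ↦ hC.1.nonempty.ne_empty (subset_empty_iff.1 hC.2)

lemma circuitsIn_insert_of_notMem_closure (he : e ∉ M.closure X) :
    circuitsIn M (insert e X) = circuitsIn M X := by
  refine (circuitsIn_mono (subset_insert e X)).antisymm' fun C ⟨hC, hCX⟩ ↦ ⟨hC, ?_⟩
  refine (subset_insert_iff_of_notMem fun heC ↦ he ?_).1 hCX
  exact M.closure_subset_closure (sdiff_singleton_subset_iff.2 hCX)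
    (hC.mem_closure_sdiff_singleton_of_mem heC)

lemma LiftCondition.ground_eq (hN : LiftCondition M N) : N.E = {C | M.IsCircuit C} := by
  simp only [hN.1, circuit_iff_isCircuit]

lemma LiftCondition.circuitsIn_subset_ground (hN : LiftCondition M N) (X : Set α) :
    circuitsIn M X ⊆ N.E :=
  hN.ground_eq ▸ fun _ hC ↦ hC.1

lemma LiftCondition.circuitsIn_ground_eq (hN : LiftCondition M N) : circuitsIn M M.E = N.E := by
  rw [hN.ground_eq]
  exact Subset.antisymm (fun _ hC ↦ hC.1) fun _ hC ↦ ⟨hC, hC.subset_ground⟩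

lemma LiftCondition.finite [M.Finite] (hN : LiftCondition M N) : N.Finite :=
  ⟨hN.ground_eq ▸ M.ground_finite.finite_subsets.subset fun _ hC ↦ hC.subset_ground⟩

variable [M.Finite]

lemma LiftCondition.mem_closure_pair (hN : LiftCondition M N) (hC₁ : M.IsCircuit C₁)
    (hC₂ : M.IsCircuit C₂) (h2 : nullity M (C₁ ∪ C₂) = 2) {C : Set α} (hC : M.IsCircuit C)
    (hCU : C ⊆ C₁ ∪ C₂) : C ∈ N.closure {C₁, C₂} := by
  refine hN.2 C₁ C₂ (circuit_iff_isCircuit.2 hC₁) (circuit_iff_isCircuit.2 hC₂) ?_ C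
    (circuit_iff_isCircuit.2 hC) hCU
  have := rk_add_nullity (union_subset hC₁.subset_ground hC₂.subset_ground)
  omega

theorem LiftCondition.mem_closure_insert_circuitsIn (hN : LiftCondition M N)
    (hC₁ : M.IsCircuit C₁) (hC₂ : M.IsCircuit C₂) (he₁ : e ∈ C₁) (he₂ : e ∈ C₂) :
    C₂ ∈ N.closure (insert C₁ (circuitsIn M ((C₁ ∪ C₂) \ {e}))) := by
  induction hn : (C₁ ∪ C₂).ncard using Nat.strong_induction_on generalizing C₁ C₂ with
  | _ n ih =>
  set S := insert C₁ (circuitsIn M ((C₁ ∪ C₂) \ {e}))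
  have hS : S ⊆ N.E := insert_subset (hN.ground_eq ▸ hC₁) (hN.circuitsIn_subset_ground _)
  obtain rfl | hne := eq_or_ne C₁ C₂
  · exact N.subset_closure S hS (mem_insert _ _)
  have hU : C₁ ∪ C₂ ⊆ M.E := union_subset hC₁.subset_ground hC₂.subset_ground
  obtain h2 | h3 : nullity M (C₁ ∪ C₂) = 2 ∨ 3 ≤ nullity M (C₁ ∪ C₂) := by
    have := two_le_nullity hC₁ hC₂ hne subset_union_left subset_union_right hU
    omega
  · -- Nullity two: eliminating `e` gives a circuit `D` with `C₁ ∪ D = C₁ ∪ C₂`.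
    obtain ⟨D, hDs, hD⟩ := hC₁.elimination hC₂ hne e
    have hDU : D ⊆ C₁ ∪ C₂ := hDs.trans sdiff_subset
    have hC₁D : C₁ ≠ D := by rintro rfl; exact (hDs he₁).2 rfl
    have hC₂D := subset_union_of_nullity_eq_two hC₁ hD hC₁D subset_union_left hDU hU h2 hC₂
      subset_union_right
    have hU' : C₁ ∪ D = C₁ ∪ C₂ :=
      (union_subset subset_union_left hDU).antisymm (union_subset subset_union_left hC₂D)
    have hDS : D ∈ S := mem_insert_of_mem _ ⟨hD, hDs⟩
    refine N.closure_subset_closure (pair_subset (mem_insert _ _) hDS) ?_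
    exact hN.mem_closure_pair hC₁ hD (hU' ▸ h2) hC₂ (hU' ▸ subset_union_right)
  · -- Nullity at least three: pass through a circuit `C` with smaller unions on both sides.
    obtain ⟨C, hCU, hC, heC, h₁, h₂⟩ :=
      exists_isCircuit_of_three_le_nullity hC₁ hC₂ hne he₁ he₂ h3
    have hfin := M.set_finite _ hU
    have hsub : ∀ {Y}, Y ⊆ C₁ ∪ C₂ → circuitsIn M (Y \ {e}) ⊆ S := fun hY ↦
      (circuitsIn_mono (sdiff_subset_sdiff_left hY)).trans (subset_insert _ _)
    have hC₁C := ih _ (hn ▸ ncard_lt_ncard h₁ hfin) hC₁ hC he₁ heC rfl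
    have hCC₂ := ih _ (hn ▸ ncard_lt_ncard h₂ hfin) hC hC₂ heC he₂ rfl
    have hCS : C ∈ N.closure S := N.closure_subset_closure
      (insert_subset (mem_insert _ _) (hsub (union_subset subset_union_left hCU))) hC₁C
    exact N.closure_subset_closure_of_subset_closure (insert_subset hCS
      ((hsub (union_subset hCU subset_union_right)).trans (N.subset_closure S hS))) hCC₂

lemma LiftCondition.closure_union_circuitsIn_insert (hN : LiftCondition M N)
    (hC₀ : M.IsCircuit C₀) (heC₀ : e ∈ C₀) (hC₀X : C₀ ⊆ insert e X) (hW : W ⊆ N.E) :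
    N.closure (W ∪ circuitsIn M (insert e X)) = N.closure (insert C₀ (W ∪ circuitsIn M X)) := by
  have hS : insert C₀ (W ∪ circuitsIn M X) ⊆ N.E :=
    insert_subset (hN.ground_eq ▸ hC₀) (union_subset hW (hN.circuitsIn_subset_ground X))
  refine (N.closure_subset_closure_of_subset_closure ?_).antisymm (N.closure_subset_closure ?_)
  · rintro Z (hZ | ⟨hZ, hZX⟩)
    · exact N.subset_closure _ hS (.inr (.inl hZ))
    by_cases heZ : e ∈ Z
    · refine N.closure_subset_closure (insert_subset_insert (subset_union_of_subset_right
        (circuitsIn_mono ?_) W)) (hN.mem_closure_insert_circuitsIn hC₀ hZ heC₀ heZ)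
      exact sdiff_singleton_subset_iff.2 (union_subset hC₀X hZX)
    · exact N.subset_closure _ hS (.inr (.inr ⟨hZ, (subset_insert_iff_of_notMem heZ).1 hZX⟩))
  · exact insert_subset (.inr ⟨hC₀, hC₀X⟩)
      (union_subset_union_right W (circuitsIn_mono (subset_insert e X)))

variable [N.Finite]

lemma LiftCondition.rk_union_circuitsIn_insert (hN : LiftCondition M N)
    (hC₀ : M.IsCircuit C₀) (heC₀ : e ∈ C₀) (hC₀X : C₀ ⊆ insert e X) (hW : W ⊆ N.E) :
    rk N (W ∪ circuitsIn M (insert e X)) = rk N (insert C₀ (W ∪ circuitsIn M X)) := by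
  rw [← rk_closure_eq, hN.closure_union_circuitsIn_insert hC₀ heC₀ hC₀X hW, rk_closure_eq]

lemma LiftCondition.rk_insert_le (hN : LiftCondition M N) (hW : W ⊆ N.E) (he : e ∈ M.E) :
    rk M (insert e X) + rk N (W ∪ circuitsIn M (insert e X)) ≤
      rk M X + rk N (W ∪ circuitsIn M X) + 1 := by
  by_cases hcl : e ∈ M.closure X
  · by_cases heX : e ∈ X
    · rw [insert_eq_of_mem heX]
      omega
    obtain ⟨C₀, hC₀X, hC₀, heC₀⟩ := exists_isCircuit_of_mem_closure hcl heX
    rw [rk_insert_of_mem_closure hcl, hN.rk_union_circuitsIn_insert hC₀ heC₀ hC₀X hW]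
    have := rk_insert_le_add_one (M := N) C₀ (W ∪ circuitsIn M X)
    omega
  · rw [rk_insert_of_notMem_closure ⟨he, hcl⟩, circuitsIn_insert_of_notMem_closure hcl]
    omega

lemma LiftCondition.rk_insert_submod (hN : LiftCondition M N) (hBA : B ⊆ A) (hWBA : WB ⊆ WA)
    (hWA : WA ⊆ N.E) (he : e ∈ M.E) :
    rk M (insert e A) + rk N (WA ∪ circuitsIn M (insert e A)) +
        (rk M B + rk N (WB ∪ circuitsIn M B)) ≤
      rk M A + rk N (WA ∪ circuitsIn M A) +
        (rk M (insert e B) + rk N (WB ∪ circuitsIn M (insert e B))) := by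
  by_cases hcl : e ∈ M.closure B
  · by_cases heA : e ∈ A
    · rw [insert_eq_of_mem heA]
      have := rk_mono (M := M) (subset_insert e B)
      have := rk_mono (M := N) (union_subset_union_right WB
        (circuitsIn_mono (M := M) (subset_insert e B)))
      omega
    -- Both sides gain the same circuit `C₀` through `e`; conclude by submodularity of `N`.
    obtain ⟨C₀, hC₀B, hC₀, heC₀⟩ := exists_isCircuit_of_mem_closure hcl fun h ↦ heA (hBA h)
    rw [rk_insert_of_mem_closure hcl, rk_insert_of_mem_closure (M.closure_subset_closure hBA hcl),
      hN.rk_union_circuitsIn_insert hC₀ heC₀ hC₀B (hWBA.trans hWA),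
      hN.rk_union_circuitsIn_insert hC₀ heC₀ (hC₀B.trans (insert_subset_insert hBA)) hWA]
    have := rk_insert_add_rk_le (M := N)
      (union_subset_union hWBA (circuitsIn_mono (M := M) hBA)) C₀
    omega
  · rw [rk_insert_of_notMem_closure ⟨he, hcl⟩, circuitsIn_insert_of_notMem_closure hcl]
    have := hN.rk_insert_le (X := A) hWA he
    omega

end LiftCondition

section Extension

variable {M : Matroid α} {N : Matroid (Set α)} {X : Set α} {Y : Set (α ⊕ Set α)}

lemma preimage_inl_insert_inl (a : α) (Y : Set (α ⊕ β)) :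
    Sum.inl ⁻¹' insert (Sum.inl a) Y = insert a (Sum.inl ⁻¹' Y) := by
  ext; simp

lemma preimage_inr_insert_inl (a : α) (Y : Set (α ⊕ β)) :
    Sum.inr ⁻¹' insert (Sum.inl a) Y = Sum.inr ⁻¹' Y := by
  ext; simp

lemma preimage_inl_insert_inr (b : β) (Y : Set (α ⊕ β)) :
    Sum.inl ⁻¹' insert (Sum.inr b) Y = Sum.inl ⁻¹' Y := by
  ext; simp

lemma preimage_inr_insert_inr (b : β) (Y : Set (α ⊕ β)) :
    Sum.inr ⁻¹' insert (Sum.inr b) Y = insert b (Sum.inr ⁻¹' Y) := by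
  ext; simp

noncomputable def extensionRk (M : Matroid α) (N : Matroid (Set α)) (Y : Set (α ⊕ Set α)) : ℕ :=
  rk M (Sum.inl ⁻¹' Y) + rk N (Sum.inr ⁻¹' Y ∪ circuitsIn M (Sum.inl ⁻¹' Y))

lemma extensionRk_insert_inl (a : α) (Y : Set (α ⊕ Set α)) :
    extensionRk M N (insert (Sum.inl a) Y) = rk M (insert a (Sum.inl ⁻¹' Y)) +
      rk N (Sum.inr ⁻¹' Y ∪ circuitsIn M (insert a (Sum.inl ⁻¹' Y))) := by
  rw [extensionRk, preimage_inl_insert_inl, preimage_inr_insert_inl]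

lemma extensionRk_insert_inr (S : Set α) (Y : Set (α ⊕ Set α)) :
    extensionRk M N (insert (Sum.inr S) Y) = rk M (Sum.inl ⁻¹' Y) +
      rk N (insert S (Sum.inr ⁻¹' Y ∪ circuitsIn M (Sum.inl ⁻¹' Y))) := by
  rw [extensionRk, preimage_inl_insert_inr, preimage_inr_insert_inr, insert_union]

variable [M.Finite]

lemma LiftCondition.rankAxioms_extensionRk (hN : LiftCondition M N) :
    RankAxioms (Sum.inl '' M.E ∪ Sum.inr '' N.E) (extensionRk M N) := by
  have := hN.finite
  have hinr : ∀ {Y}, Y ⊆ Sum.inl '' M.E ∪ Sum.inr '' N.E → Sum.inr ⁻¹' Y ⊆ N.E := fun hY ↦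
    (preimage_mono hY).trans (by simp [preimage_image_eq _ Sum.inr_injective])
  refine ⟨(M.ground_finite.image _).union (N.ground_finite.image _), ?_, ?_, ?_, ?_⟩
  · simp [extensionRk, circuitsIn_empty, rk_empty (M := M), rk_empty (M := N)]
  · rintro Y _ - (⟨a, -, rfl⟩ | ⟨S, -, rfl⟩)
    · rw [extensionRk_insert_inl]
      exact add_le_add (rk_mono (subset_insert _ _))
        (rk_mono (union_subset_union_right _ (circuitsIn_mono (subset_insert _ _))))
    · rw [extensionRk_insert_inr]
      exact Nat.add_le_add_left (rk_mono (subset_insert _ _)) _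
  · rintro Y _ hY (⟨a, ha, rfl⟩ | ⟨S, -, rfl⟩)
    · rw [extensionRk_insert_inl]
      exact hN.rk_insert_le (hinr hY) ha
    · rw [extensionRk_insert_inr, extensionRk]
      have := rk_insert_le_add_one (M := N) S (Sum.inr ⁻¹' Y ∪ circuitsIn M (Sum.inl ⁻¹' Y))
      omega
  · rintro A B _ hBA hA (⟨a, ha, rfl⟩ | ⟨S, -, rfl⟩)
    · rw [extensionRk_insert_inl, extensionRk_insert_inl]
      exact hN.rk_insert_submod (preimage_mono hBA) (preimage_mono hBA) (hinr hA) ha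
    · rw [extensionRk_insert_inr, extensionRk_insert_inr, extensionRk, extensionRk]
      have := rk_insert_add_rk_le (M := N)
        (union_subset_union (preimage_mono (f := Sum.inr) hBA)
          (circuitsIn_mono (M := M) (preimage_mono (f := Sum.inl) hBA))) S
      omega

noncomputable def liftExtension (hN : LiftCondition M N) : Matroid (α ⊕ Set α) :=
  hN.rankAxioms_extensionRk.matroid

noncomputable def liftMatroid (hN : LiftCondition M N) : Matroid α :=
  (liftExtension hN ＼ Sum.inr '' N.E).comap Sum.inl

variable (hN : LiftCondition M N)

instance : (liftExtension hN).Finite := RankAxioms.matroid_finite _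

instance : (liftMatroid hN).RankFinite := by
  unfold liftMatroid
  infer_instance

lemma liftExtension_ground : (liftExtension hN).E = Sum.inl '' M.E ∪ Sum.inr '' N.E := rfl

lemma rk_liftExtension (hY : Y ⊆ Sum.inl '' M.E ∪ Sum.inr '' N.E) :
    rk (liftExtension hN) Y = extensionRk M N Y :=
  RankAxioms.rk_matroid _ hY

lemma liftExtension_ground_sdiff : (liftExtension hN).E \ Sum.inr '' N.E = Sum.inl '' M.E := by
  rw [liftExtension_ground, union_sdiff_right, disjoint_image_inl_image_inr.sdiff_eq_left]

lemma liftMatroid_ground : (liftMatroid hN).E = M.E := by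
  rw [liftMatroid, comap_ground_eq, delete_ground, liftExtension_ground_sdiff,
    preimage_image_eq _ Sum.inl_injective]

lemma rk_liftMatroid (hX : X ⊆ M.E) : rk (liftMatroid hN) X = rk M X + rk N (circuitsIn M X) := by
  have hXK : Sum.inl '' X ⊆ (liftExtension hN).E \ Sum.inr '' N.E :=
    liftExtension_ground_sdiff hN ▸ image_mono hX
  rw [← Nat.cast_inj (R := ℕ∞), cast_rk, liftMatroid, eRk_comap, delete_eq_restrict,
    restrict_eRk_eq _ hXK, ← cast_rk, rk_liftExtension hN (hXK.trans sdiff_subset), Nat.cast_inj,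
    extensionRk, preimage_image_eq _ Sum.inl_injective]
  simp

lemma liftExtension_delete :
    liftExtension hN ＼ Sum.inr '' N.E = (liftMatroid hN).map Sum.inl Sum.inl_injective.injOn :=
  eq_map_of_comap_eq Sum.inl_injective
    ((liftExtension_ground_sdiff hN).subset.trans (image_subset_range _ _)) rfl

lemma liftExtension_contract :
    liftExtension hN ／ Sum.inr '' N.E = M.map Sum.inl Sum.inl_injective.injOn := by
  refine eq_map_of_comap_eq Sum.inl_injective
    ((liftExtension_ground_sdiff hN).subset.trans (image_subset_range _ _)) ?_
  have hground : Sum.inl ⁻¹' (liftExtension hN ／ Sum.inr '' N.E).E = M.E := by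
    rw [contract_ground, liftExtension_ground_sdiff, preimage_image_eq _ Sum.inl_injective]
  refine ext_indep hground fun I hI ↦ ?_
  replace hI : I ⊆ M.E := hground ▸ hI
  have hF := rk_liftExtension hN (Y := Sum.inr '' N.E) subset_union_right
  have hIF := rk_liftExtension hN (Y := Sum.inl '' I ∪ Sum.inr '' N.E)
    (union_subset_union_left _ (image_mono hI))
  simp only [extensionRk, preimage_union, preimage_image_eq _ Sum.inl_injective,
    preimage_image_eq _ Sum.inr_injective, preimage_inl_image_inr, preimage_inr_image_inl,
    union_empty, empty_union, union_eq_left.2 (hN.circuitsIn_subset_ground _), rk_empty] at hF hIF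
  rw [comap_indep_iff, contract_indep_iff_rk, and_iff_left Sum.inl_injective.injOn, hF, hIF,
    ncard_image_of_injective _ Sum.inl_injective, indep_iff_rk_eq_ncard (M.set_finite I hI),
    liftExtension_ground_sdiff]
  simp [image_mono hI]

end Extension

/-- Theorem 2 (new lift construction): if `N`, a matroid on the circuits of `M`, satisfies the
lift condition, then `X ↦ r_M(X) + r_N({circuits of M contained in X})` is the rank function of
a matroid `L` on `E`, and `L` is a rank-`r(N)` lift of `M`. -/
theorem stmt0 {α : Type} (M : Matroid α) (hM : M.E.Finite)
    (N : Matroid (Set α)) (hN : LiftCondition M N) :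
    ∃ L : Matroid α, L.E = M.E ∧
      (∀ X ⊆ M.E, rk L X = rk M X + rk N {C | Circuit M C ∧ C ⊆ X}) ∧
      IsLiftOf L M ∧ rank L = rank M + rank N := by
  have : M.Finite := ⟨hM⟩
  have hcircuits (X : Set α) : {C | Circuit M C ∧ C ⊆ X} = circuitsIn M X := by
    simp only [circuit_iff_isCircuit]
    rfl
  refine ⟨liftMatroid hN, liftMatroid_ground hN, fun X hX ↦ hcircuits X ▸ rk_liftMatroid hN hX,
    ⟨liftMatroid_ground hN, Set α, liftExtension hN, Sum.inr '' N.E, disjoint_image_inl_image_inr,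
      rfl, liftExtension_contract hN, liftExtension_delete hN⟩, ?_⟩
  rw [rank, rank, rank, liftMatroid_ground, rk_liftMatroid hN subset_rfl,
    hN.circuitsIn_ground_eq]

end PaperLift
end

section
/- Let r ≥ 4 and t ≥ 3 be integers with r ≤ 2t−2, and let K be a rank-r matroid on ground set [2t+2] in which every r-element subset is either a basis or a circuit-hyperplane and whose circuit-hyperplanes are exactly the members of 𝒞'(r,t) ∪ 𝒞''(r,t). Then K is not representable over any field. -/
open Set Matroid
open scoped Matroid

namespace PaperLift

variable {α : Type} {β : Type}

/-! Let `φ` represent `K`, and put `x = 2t+1`, `y = 2t+2`. Each circuit `C_i ∪ {x, y}` yields a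
vector `φ x - a_i • φ y` in the span of `φ '' C_i`. As `C_i ∪ C_{i+1}` is a hyperplane avoiding `x`,
consecutive `a_i` agree, so one vector `w` lies in the spans of both `φ '' C_1` and `φ '' C_t`.
Writing `w` over `C_1` uses `r - 2 ∈ C_1 \ C_t` with a nonzero coefficient (otherwise `C_1 ∪ {x, y}`
would not be a circuit), so `C_1 ∪ C_t` is dependent; but it is an `r`-set that is no
circuit-hyperplane, hence a base. -/

lemma mem_sup_of_sub_smul_mem {F W : Type} [Field F] [AddCommGroup W] [Module F W]
    {P Q : Submodule F W} {u v : W} {a b : F} (hP : u - a • v ∈ P) (hQ : u - b • v ∈ Q)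
    (hab : a ≠ b) : u ∈ P ⊔ Q := by
  have hv : v ∈ P ⊔ Q := by
    have hdiff : (b - a) • v ∈ P ⊔ Q := by
      convert Submodule.sub_mem _ (Submodule.mem_sup_left hP) (Submodule.mem_sup_right hQ)
        using 1
      module
    simpa [smul_smul, inv_mul_cancel₀ (sub_ne_zero.2 hab.symm)] using
      Submodule.smul_mem _ (b - a)⁻¹ hdiff
  simpa using Submodule.add_mem _ (Submodule.mem_sup_left hP) (Submodule.smul_mem _ a hv)

def IsRep (F : Type) [Field F] {W : Type} [AddCommGroup W] [Module F W]
    (M : Matroid α) (φ : α → W) : Prop :=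
  ∀ I ⊆ M.E, (M.Indep I ↔ LinearIndepOn F φ I)

lemma Representable.exists_isRep {M : Matroid α} {F : Type} [Field F] (h : Representable M F) :
    ∃ (W : Type) (_ : AddCommGroup W) (_ : Module F W) (φ : α → W), IsRep F M φ := by
  obtain ⟨W, _, _, φ, hφ⟩ := h
  exact ⟨W, _, _, φ, fun I hI ↦ (hφ I hI).trans (and_iff_right_of_imp LinearIndepOn.injOn)⟩

namespace IsRep

variable {F W : Type} [Field F] [AddCommGroup W] [Module F W] {M : Matroid α} {φ : α → W}
  {I X C D : Set α} {e x y : α}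

open Submodule

lemma linearIndepOn (hφ : IsRep F M φ) (hI : M.Indep I) : LinearIndepOn F φ I :=
  (hφ I hI.subset_ground).1 hI

lemma notMem_span_of_indep_insert (hφ : IsRep F M φ) (hI : M.Indep (insert e I)) (heI : e ∉ I) :
    φ e ∉ span F (φ '' I) :=
  ((linearIndepOn_insert heI).1 (hφ.linearIndepOn hI)).2

lemma mem_span_of_mem_closure (hφ : IsRep F M φ) (hI : M.Indep I) (he : e ∈ M.closure I) :
    φ e ∈ span F (φ '' I) := by
  by_cases heI : e ∈ I
  · exact subset_span (mem_image_of_mem φ heI)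
  by_contra hspan
  have hdep : M.Dep (insert e I) := (hI.mem_closure_iff_of_notMem heI).1 he
  exact hdep.not_indep <| (hφ _ hdep.subset_ground).2 <|
    (linearIndepOn_insert heI).2 ⟨hφ.linearIndepOn hI, hspan⟩

lemma mem_closure_of_mem_span (hφ : IsRep F M φ) (hX : X ⊆ M.E) (he : e ∈ M.E)
    (hspan : φ e ∈ span F (φ '' X)) : e ∈ M.closure X := by
  obtain ⟨I, hI⟩ := M.exists_isBasis X
  rw [← hI.closure_eq_closure]
  by_contra heI
  have heI' : e ∉ I := fun h ↦ heI (M.subset_closure I hI.indep.subset_ground h)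
  have hXI : span F (φ '' X) ≤ span F (φ '' I) :=
    span_le.2 <| image_subset_iff.2 fun z hz ↦
      hφ.mem_span_of_mem_closure hI.indep (hI.subset_closure hz)
  exact hφ.notMem_span_of_indep_insert (hI.indep.insert_indep_iff.2 (Or.inl ⟨he, heI⟩)) heI'
    (hXI hspan)

lemma mem_span_of_circuit (hφ : IsRep F M φ) (hC : Circuit M C) (he : e ∈ C) :
    φ e ∈ span F (φ '' (C \ {e})) := by
  have hI : M.Indep (C \ {e}) := hC.2 _ (sdiff_singleton_ssubset.2 he)
  refine hφ.mem_span_of_mem_closure hI ((hI.mem_closure_iff_of_notMem (by simp)).2 ?_)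
  rw [insert_sdiff_singleton, insert_eq_of_mem he]; exact hC.1

lemma exists_sub_smul_mem_span (hφ : IsRep F M φ) (hC : Circuit M (C ∪ {x, y})) :
    ∃ a : F, φ x - a • φ y ∈ span F (φ '' C) := by
  have hx := hφ.mem_span_of_circuit hC (e := x) (by simp)
  have hsub : (C ∪ {x, y}) \ {x} ⊆ insert y C := by
    rintro z ⟨hz | hz | hz, hzx⟩ <;> simp_all
  have hx' : φ x ∈ span F (insert (φ y) (φ '' C)) := by
    rw [← image_insert_eq]; exact span_mono (image_mono hsub) hx
  obtain ⟨a, z, hz, hxz⟩ := mem_span_insert.1 hx'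
  exact ⟨a, by rwa [hxz, add_sub_cancel_left]⟩

lemma sub_smul_notMem_span_of_indep_union (hφ : IsRep F M φ) (hC : Circuit M (C ∪ {x, y}))
    (hxy : x ≠ y) (hxC : x ∉ C) (hyC : y ∉ C) (hind : M.Indep (C ∪ D)) (heC : e ∈ C)
    (heD : e ∉ D) {a : F} (hwC : φ x - a • φ y ∈ span F (φ '' C)) :
    φ x - a • φ y ∉ span F (φ '' D) := by
  intro hwD
  have hCe : φ '' C = insert (φ e) (φ '' (C \ {e})) := by
    rw [← image_insert_eq, insert_sdiff_singleton, insert_eq_of_mem heC]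
  rw [hCe] at hwC
  obtain ⟨μ, z, hz, hw⟩ := mem_span_insert.1 hwC
  by_cases hμ : μ = 0
  · have hind' : M.Indep (insert x (insert y (C \ {e}))) := by
      refine (hC.2 _ (sdiff_singleton_ssubset.2 (Or.inl heC))).subset ?_
      rintro z (rfl | rfl | ⟨hzC, hze⟩)
      · exact ⟨by simp, fun h ↦ hxC (h ▸ heC)⟩
      · exact ⟨by simp, fun h ↦ hyC (h ▸ heC)⟩
      · exact ⟨Or.inl hzC, hze⟩
    refine hφ.notMem_span_of_indep_insert hind' (by simp [hxy, hxC]) ?_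
    rw [image_insert_eq]
    refine mem_span_insert.2 ⟨a, z, hz, ?_⟩
    rw [hμ, zero_smul, zero_add] at hw
    rw [← hw, add_sub_cancel]
  · have hspan : φ e ∈ span F (φ '' ((C ∪ D) \ {e})) := by
      have hφe : φ e = μ⁻¹ • ((φ x - a • φ y) - z) := by
        rw [hw, add_sub_cancel_right, inv_smul_smul₀ hμ]
      rw [hφe]
      refine smul_mem _ _ (sub_mem ?_ ?_)
      · refine span_mono (image_mono ?_) hwD
        exact fun d hd ↦ ⟨Or.inr hd, fun h ↦ heD (h ▸ hd)⟩
      · exact span_mono (image_mono (sdiff_subset_sdiff_left subset_union_left)) hz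
    refine hφ.notMem_span_of_indep_insert ?_ (by simp) hspan
    rwa [insert_sdiff_singleton, insert_eq_of_mem (mem_union_left D heC)]

theorem not_indep_union_of_circuit_chain (hφ : IsRep F M φ) {C : ℕ → Set α} {n : ℕ}
    (hn : 1 ≤ n) (hxy : x ≠ y) (hxC : x ∉ C 1) (hyC : y ∉ C 1)
    (hcirc : ∀ i ∈ Icc 1 n, Circuit M (C i ∪ {x, y}))
    (hcl : ∀ i ∈ Ico 1 n, x ∉ M.closure (C i ∪ C (i + 1)))
    (he1 : e ∈ C 1) (hen : e ∉ C n) : ¬ M.Indep (C 1 ∪ C n) := by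
  have hground : ∀ i ∈ Icc 1 n, C i ∪ {x, y} ⊆ M.E := fun i hi ↦ (hcirc i hi).1.subset_ground
  have hxE : x ∈ M.E := hground 1 ⟨le_rfl, hn⟩ (by simp)
  have hchain : ∀ i ∈ Icc 1 n, ∃ a : F,
      φ x - a • φ y ∈ span F (φ '' C 1) ∧ φ x - a • φ y ∈ span F (φ '' C i) := by
    rintro i ⟨hi1, hin⟩
    induction i, hi1 using Nat.le_induction with
    | base =>
      obtain ⟨a, ha⟩ := hφ.exists_sub_smul_mem_span (hcirc 1 ⟨le_rfl, hn⟩)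
      exact ⟨a, ha, ha⟩
    | succ i hi ih =>
      obtain ⟨a, ha1, hai⟩ := ih (by omega)
      obtain ⟨b, hb⟩ := hφ.exists_sub_smul_mem_span (hcirc (i + 1) ⟨by omega, hin⟩)
      obtain rfl : a = b := by
        by_contra hab
        have hE : C i ∪ C (i + 1) ⊆ M.E := union_subset
          (subset_union_left.trans (hground i ⟨hi, by omega⟩))
          (subset_union_left.trans (hground (i + 1) ⟨by omega, hin⟩))
        refine hcl i ⟨hi, hin⟩ (hφ.mem_closure_of_mem_span hE hxE ?_)
        rw [image_union, span_union]
        exact mem_sup_of_sub_smul_mem hai hb hab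
      exact ⟨a, ha1, hb⟩
  intro hind
  obtain ⟨a, ha1, han⟩ := hchain n ⟨hn, le_rfl⟩
  exact hφ.sub_smul_notMem_span_of_indep_union (hcirc 1 ⟨le_rfl, hn⟩) hxy hxC hyC hind he1 hen
    ha1 han

end IsRep

section Circulant

def ciPos (t i k : ℕ) : ℕ := (k + 2 * (i - 1) - 1) % (2 * t) + 1

lemma mem_Ci {r t i x : ℕ} : x ∈ Ci r t i ↔ ∃ k ∈ Icc 1 (r - 2), ciPos t i k = x := Iff.rfl

lemma ciPos_eq {t i k : ℕ} (hi : 1 ≤ i) (hk : 1 ≤ k) (h : k + 2 * i ≤ 4 * t + 2) :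
    ciPos t i k = if k + 2 * i ≤ 2 * t + 2 then k + 2 * i - 2 else k + 2 * i - 2 - 2 * t := by
  unfold ciPos
  split_ifs with h'
  · rw [Nat.mod_eq_of_lt (by omega)]; omega
  · rw [Nat.mod_eq_sub_mod (by omega), Nat.mod_eq_of_lt (by omega)]; omega

variable {r t : ℕ}

lemma Ci_subset_Icc (ht : 1 ≤ t) (i : ℕ) : Ci r t i ⊆ Icc 1 (2 * t) := by
  intro x hx
  obtain ⟨k, -, rfl⟩ := mem_Ci.1 hx
  have := Nat.mod_lt (k + 2 * (i - 1) - 1) (by omega : 0 < 2 * t)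
  rw [mem_Icc, ciPos]
  omega

lemma Ci_one (hrt : r ≤ 2 * t + 2) : Ci r t 1 = Icc 1 (r - 2) := by
  ext x
  rw [mem_Ci]
  refine ⟨?_, fun hx ↦ ⟨x, hx, ?_⟩⟩
  · rintro ⟨k, ⟨hk1, hk2⟩, rfl⟩
    rw [ciPos_eq le_rfl hk1 (by omega)]
    split_ifs <;> exact ⟨by omega, by omega⟩
  · obtain ⟨hx1, hx2⟩ := hx
    rw [ciPos_eq le_rfl hx1 (by omega)]
    split_ifs <;> omega

lemma Ci_last (hr : 4 ≤ r) (hrt : r ≤ 2 * t + 2) :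
    Ci r t t = insert (2 * t - 1) (insert (2 * t) (Icc 1 (r - 4))) := by
  have ht : 1 ≤ t := by omega
  ext x
  simp only [mem_Ci, mem_insert_iff, mem_Icc]
  constructor
  · rintro ⟨k, ⟨hk1, hk2⟩, rfl⟩
    rw [ciPos_eq ht hk1 (by omega)]
    split_ifs <;> omega
  · rintro (rfl | rfl | ⟨hx1, hx2⟩)
    · refine ⟨1, ⟨le_rfl, by omega⟩, ?_⟩
      rw [ciPos_eq ht le_rfl (by omega)]
      split_ifs <;> omega
    · refine ⟨2, ⟨by omega, by omega⟩, ?_⟩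
      rw [ciPos_eq ht (by omega) (by omega)]
      split_ifs <;> omega
    · refine ⟨x + 2, ⟨by omega, by omega⟩, ?_⟩
      rw [ciPos_eq ht (by omega) (by omega)]
      split_ifs <;> omega

lemma two_mul_sub_two_mem_of_two_mul_mem (hrt : r + 2 ≤ 2 * t) {j : ℕ} (hj1 : 1 ≤ j)
    (hjt : j + 1 ≤ t) (h : 2 * t ∈ Ci r t j ∪ Ci r t (j + 1)) :
    2 * t - 2 ∈ Ci r t j ∪ Ci r t (j + 1) := by
  simp only [mem_union, mem_Ci, mem_Icc] at h ⊢
  rcases h with ⟨k, ⟨hk1, hk2⟩, hk⟩ | ⟨k, ⟨hk1, hk2⟩, hk⟩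
  · have hkj : k + 2 * j = 2 * t + 2 := by
      rw [ciPos_eq hj1 hk1 (by omega)] at hk
      split_ifs at hk <;> omega
    refine Or.inl ⟨k - 2, ⟨by omega, by omega⟩, ?_⟩
    rw [ciPos_eq hj1 (by omega) (by omega)]
    split_ifs <;> omega
  · have hkj : k + 2 * j = 2 * t := by
      rw [ciPos_eq (by omega) hk1 (by omega)] at hk
      split_ifs at hk <;> omega
    refine Or.inl ⟨k, ⟨hk1, hk2⟩, ?_⟩
    rw [ciPos_eq hj1 hk1 (by omega)]
    split_ifs <;> omega

lemma ncard_Ci_one_union_Ci_last (hr : 4 ≤ r) (hrt : r + 2 ≤ 2 * t) :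
    (Ci r t 1 ∪ Ci r t t).ncard = r := by
  have hB : Ci r t 1 ∪ Ci r t t = insert (2 * t - 1) (insert (2 * t) (Icc 1 (r - 2))) := by
    rw [Ci_one (by omega), Ci_last hr (by omega)]
    ext x
    simp only [mem_union, mem_insert_iff, mem_Icc]
    omega
  rw [hB, ncard_insert_of_notMem (by simp; omega), ncard_insert_of_notMem (by simp; omega),
    ncard_Icc_nat]
  omega

lemma Ci_one_union_Ci_last_notMem (hr : 4 ≤ r) (hrt : r + 2 ≤ 2 * t) :
    Ci r t 1 ∪ Ci r t t ∉ CC' r t ∪ CC'' r t := by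
  have hB : ∀ x, x ∈ Ci r t 1 ∪ Ci r t t ↔ x = 2 * t - 1 ∨ x = 2 * t ∨ 1 ≤ x ∧ x ≤ r - 2 := by
    intro x
    rw [Ci_one (by omega), Ci_last hr (by omega)]
    simp only [mem_union, mem_insert_iff, mem_Icc]
    omega
  rintro (⟨i, -, hi⟩ | ⟨j, ⟨hj1, hjt⟩, hj : Ci r t j ∪ Ci r t (j + 1) = _⟩)
  · have h := (hB (2 * t + 2)).1 (hi ▸ Or.inr (by simp))
    omega
  · have h := two_mul_sub_two_mem_of_two_mul_mem hrt hj1 (by omega)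
      (hj ▸ (hB (2 * t)).2 (by omega))
    rw [hj, hB] at h
    omega

end Circulant

theorem stmt4_general (r t : ℕ) (hr : 4 ≤ r) (hrt : r + 2 ≤ 2 * t)
    (K : Matroid ℕ) (hK : IsKrt r t K) :
    ∀ (F : Type) [Field F], ¬ Representable K F := by
  intro F _ hrep
  obtain ⟨W, _, _, φ, hφ⟩ := hrep.exists_isRep
  obtain ⟨hE, -, hsp, hCH⟩ := hK
  have hCi (i : ℕ) {x : ℕ} (hx : 2 * t < x) : x ∉ Ci r t i :=
    fun h ↦ (Ci_subset_Icc (by omega) i h).2.not_gt hx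
  have hB : K.IsBase (Ci r t 1 ∪ Ci r t t) := by
    refine (hsp _ ?_ (ncard_Ci_one_union_Ci_last hr hrt)).resolve_right ?_
    · rw [hE]
      exact (union_subset (Ci_subset_Icc (by omega) 1) (Ci_subset_Icc (by omega) t)).trans
        (Icc_subset_Icc le_rfl (by omega))
    · rw [hCH]
      exact Ci_one_union_Ci_last_notMem hr hrt
  refine hφ.not_indep_union_of_circuit_chain (C := Ci r t) (x := 2 * t + 1) (y := 2 * t + 2)
    (e := r - 2) (by omega) (by omega) (hCi 1 (by omega)) (hCi 1 (by omega))
    (fun i hi ↦ ((hCH _).2 (Or.inl ⟨i, hi, rfl⟩)).1) (fun i ⟨hi1, hit⟩ ↦ ?_)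
    (by rw [Ci_one (by omega)]; exact ⟨by omega, le_rfl⟩)
    (by rw [Ci_last hr (by omega)]; simp only [mem_insert_iff, mem_Icc]; omega) hB.indep
  rw [((hCH _).2 (Or.inr ⟨i, ⟨hi1, by omega⟩, rfl⟩)).2.1.closure]
  rintro (h | h) <;> exact hCi _ (by omega) h

/-- The matroid `K(r,t)` is not representable over any field. -/
theorem stmt4 (r t : ℕ) (hr : 4 ≤ r) (ht : 3 ≤ t) (hrt : r + 2 ≤ 2 * t)
    (K : Matroid ℕ) (hK : IsKrt r t K) :
    ∀ (F : Type) [Field F], ¬ Representable K F :=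
  stmt4_general r t hr hrt K hK

end PaperLift
end

section
/- Let r ≥ 4 and t ≥ 3 be integers with r ≤ 2t−2. Then any two distinct members of 𝒞'(r,t) ∪ 𝒞''(r,t) intersect in at most r−2 elements, and consequently there exists a rank-r matroid K(r,t) on ground set [2t+2] in which every r-element subset is either a basis or a circuit-hyperplane and whose circuit-hyperplanes are exactly the members of 𝒞'(r,t) ∪ 𝒞''(r,t). -/
open Set Matroid
open scoped Matroid

namespace PaperLift

variable {α : Type} {β : Type}

/-!
Any two members of `𝒞'(r,t) ∪ 𝒞''(r,t)` are arcs of the cycle `1, …, 2t` (`C_i ∪ C_{i+1}` of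
length `r`, `C_i` of length `r - 2` together with the two points of `X`), and two arcs of length
`l ≤ 2t - 2` whose starting points differ by a shift between `2` and `2t - 2` meet in at most
`l - 2` points; this gives the intersection bound.

For any family `𝒞` of `r`-sets pairwise sharing at most `r - 2` elements, the sets of size at
most `r` outside `𝒞` are the independent sets of a matroid: augmentation can only fail if two
members share `r - 1` elements. Exchanging one element of a member `C` for an outside one gives a
base, so `C` is not spanning while every proper superset of it is; hence `C` is a
circuit-hyperplane. Conversely a circuit-hyperplane outside `𝒞` would have more than `r`
elements, hence contain a base, and could not be a proper flat.
-/

section SparsePaving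

variable {E : Set α} {r : ℕ} {𝒞 : Set (Set α)}

lemma eq_of_subset_inter_of_le_ncard_add_one (hr : 0 < r) (h𝒞r : ∀ C ∈ 𝒞, C.ncard = r)
    (h𝒞 : 𝒞.Pairwise fun C₁ C₂ => (C₁ ∩ C₂).ncard + 2 ≤ r) {C₁ C₂ I : Set α}
    (h₁ : C₁ ∈ 𝒞) (h₂ : C₂ ∈ 𝒞) (hI : I ⊆ C₁ ∩ C₂) (hIr : r ≤ I.ncard + 1) : C₁ = C₂ := by
  by_contra hne
  have hfin : (C₁ ∩ C₂).Finite := (finite_of_ncard_pos (h𝒞r C₁ h₁ ▸ hr)).inter_of_left C₂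
  have := h𝒞 h₁ h₂ hne
  have := ncard_le_ncard hI hfin
  omega

lemma notMem_of_subset (h𝒞r : ∀ C ∈ 𝒞, C.ncard = r) {I J : Set α} (hJ : J.Finite)
    (hJr : J.ncard ≤ r) (hJ𝒞 : J ∉ 𝒞) (hIJ : I ⊆ J) : I ∉ 𝒞 := fun hI =>
  hJ𝒞 (eq_of_subset_of_ncard_le hIJ (hJr.trans (h𝒞r I hI).ge) hJ ▸ hI)

lemma exists_insert_notMem (hr : 0 < r) (h𝒞r : ∀ C ∈ 𝒞, C.ncard = r)
    (h𝒞 : 𝒞.Pairwise fun C₁ C₂ => (C₁ ∩ C₂).ncard + 2 ≤ r) {I J : Set α} (hI : I.Finite)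
    (hJr : J.ncard ≤ r) (hJ𝒞 : J ∉ 𝒞) (hIJ : I.ncard < J.ncard) :
    ∃ e ∈ J, e ∉ I ∧ (insert e I).ncard ≤ r ∧ insert e I ∉ 𝒞 := by
  obtain ⟨x, hxJ, hxI⟩ := exists_mem_notMem_of_ncard_lt_ncard hIJ hI
  have hxr : (insert x I).ncard = I.ncard + 1 := ncard_insert_of_notMem hxI hI
  by_cases hx : insert x I ∈ 𝒞
  swap
  · exact ⟨x, hxJ, hxI, by omega, hx⟩
  -- `I` is one element short of a member of `𝒞`, so `insert x I` is the only one containing it.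
  have hIr : I.ncard + 1 = r := hxr ▸ h𝒞r _ hx
  obtain ⟨y, hyJ, hyx⟩ : ∃ y ∈ J, y ∉ insert x I := not_subset.1 fun hJx =>
    hJ𝒞 ((eq_of_subset_of_ncard_le hJx (by omega) (hI.insert x)).symm ▸ hx)
  have hyI : y ∉ I := fun h => hyx (mem_insert_of_mem x h)
  refine ⟨y, hyJ, hyI, by rw [ncard_insert_of_notMem hyI hI]; omega, fun hy => hyx ?_⟩
  have := eq_of_subset_inter_of_le_ncard_add_one hr h𝒞r h𝒞 hy hx
    (subset_inter (subset_insert y I) (subset_insert x I)) hIr.ge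
  exact this ▸ mem_insert y I

lemma insert_sdiff_singleton_notMem (hr : 0 < r) (h𝒞r : ∀ C ∈ 𝒞, C.ncard = r)
    (h𝒞 : 𝒞.Pairwise fun C₁ C₂ => (C₁ ∩ C₂).ncard + 2 ≤ r) {C : Set α} {x y : α}
    (hC : C ∈ 𝒞) (hx : x ∉ C) (hy : y ∈ C) : insert x (C \ {y}) ∉ 𝒞 := fun h =>
  have hCfin : C.Finite := finite_of_ncard_pos (h𝒞r C hC ▸ hr)
  hx <| eq_of_subset_inter_of_le_ncard_add_one hr h𝒞r h𝒞 h hC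
    (subset_inter (subset_insert x _) sdiff_subset)
    (by rw [ncard_sdiff_singleton_add_one hy hCfin, h𝒞r C hC]) ▸ mem_insert x _

lemma exists_subset_ncard_eq_notMem (hr : 0 < r) (h𝒞r : ∀ C ∈ 𝒞, C.ncard = r)
    (h𝒞 : 𝒞.Pairwise fun C₁ C₂ => (C₁ ∩ C₂).ncard + 2 ≤ r) (hE : E.Finite)
    (hrE : r < E.ncard) : ∃ B ⊆ E, B.ncard = r ∧ B ∉ 𝒞 := by
  obtain ⟨S, hSE, hSr⟩ := exists_subset_card_eq hrE.le
  by_cases hS : S ∈ 𝒞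
  swap
  · exact ⟨S, hSE, hSr, hS⟩
  obtain ⟨x, hxE, hxS⟩ := exists_mem_notMem_of_ncard_lt_ncard (hSr ▸ hrE) (hE.subset hSE)
  obtain ⟨y, hyS⟩ := nonempty_of_ncard_ne_zero (hSr ▸ hr.ne')
  exact ⟨insert x (S \ {y}), insert_subset hxE (sdiff_subset.trans hSE),
    (ncard_exchange hxS hyS).trans hSr, insert_sdiff_singleton_notMem hr h𝒞r h𝒞 hS hxS hyS⟩

noncomputable def sparsePavingMatroid (hE : E.Finite) (hr : 0 < r)
    (h𝒞r : ∀ C ∈ 𝒞, C.ncard = r) (h𝒞 : 𝒞.Pairwise fun C₁ C₂ => (C₁ ∩ C₂).ncard + 2 ≤ r) :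
    Matroid α :=
  (IndepMatroid.ofFinite hE (fun I => I ⊆ E ∧ I.ncard ≤ r ∧ I ∉ 𝒞)
    ⟨empty_subset E, by simp, fun h => hr.ne (by simpa using h𝒞r ∅ h)⟩
    (fun _ J hJ hIJ => ⟨hIJ.trans hJ.1, (ncard_le_ncard hIJ (hE.subset hJ.1)).trans hJ.2.1,
      notMem_of_subset h𝒞r (hE.subset hJ.1) hJ.2.1 hJ.2.2 hIJ⟩)
    (fun I J hI hJ hIJ => by
      obtain ⟨e, heJ, heI, her, he𝒞⟩ :=
        exists_insert_notMem hr h𝒞r h𝒞 (hE.subset hI.1) hJ.2.1 hJ.2.2 hIJ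
      exact ⟨e, heJ, heI, insert_subset (hJ.1 heJ) hI.1, her, he𝒞⟩)
    (fun _ hI => hI.1)).matroid

variable {hE : E.Finite} {hr : 0 < r} {h𝒞r : ∀ C ∈ 𝒞, C.ncard = r}
  {h𝒞 : 𝒞.Pairwise fun C₁ C₂ => (C₁ ∩ C₂).ncard + 2 ≤ r}

lemma sparsePavingMatroid_isBase_of_ncard_eq {B : Set α} (hBE : B ⊆ E) (hBr : B.ncard = r)
    (hB𝒞 : B ∉ 𝒞) : (sparsePavingMatroid hE hr h𝒞r h𝒞).IsBase B := by
  refine isBase_iff_maximal_indep.2 ⟨⟨hBE, hBr.le, hB𝒞⟩, fun I hI hBI => ?_⟩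
  exact (eq_of_subset_of_ncard_le hBI (hBr ▸ hI.2.1) (hE.subset hI.1)).ge

lemma sparsePavingMatroid_isBase_iff (hrE : r < E.ncard) {B : Set α} :
    (sparsePavingMatroid hE hr h𝒞r h𝒞).IsBase B ↔ B ⊆ E ∧ B.ncard = r ∧ B ∉ 𝒞 := by
  refine ⟨fun hB => ?_, fun ⟨hBE, hBr, hB𝒞⟩ => sparsePavingMatroid_isBase_of_ncard_eq hBE hBr hB𝒞⟩
  obtain ⟨B₀, hB₀E, hB₀r, hB₀𝒞⟩ := exists_subset_ncard_eq_notMem hr h𝒞r h𝒞 hE hrE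
  have hB₀ : (sparsePavingMatroid hE hr h𝒞r h𝒞).IsBase B₀ :=
    sparsePavingMatroid_isBase_of_ncard_eq hB₀E hB₀r hB₀𝒞
  exact ⟨hB.indep.1, (hB.ncard_eq_ncard_of_isBase hB₀).trans hB₀r, hB.indep.2.2⟩

lemma sparsePavingMatroid_rank (hrE : r < E.ncard) :
    rank (sparsePavingMatroid hE hr h𝒞r h𝒞) = r := by
  obtain ⟨B, hBE, hBr, hB𝒞⟩ := exists_subset_ncard_eq_notMem hr h𝒞r h𝒞 hE hrE
  refine IsGreatest.csSup_eq ⟨⟨B, ⟨hBE, hBr.le, hB𝒞⟩, hBE, hBr⟩, ?_⟩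
  rintro n ⟨I, hI, -, rfl⟩
  exact hI.2.1

lemma sparsePavingMatroid_not_spanning (hrE : r < E.ncard) {C : Set α} (hC : C ∈ 𝒞) :
    ¬ (sparsePavingMatroid hE hr h𝒞r h𝒞).Spanning C := fun hCs => by
  obtain ⟨B, hB, hBC⟩ := hCs.exists_isBase_subset
  obtain ⟨-, hBr, hB𝒞⟩ := (sparsePavingMatroid_isBase_iff hrE).1 hB
  have hCfin : C.Finite := finite_of_ncard_pos (h𝒞r C hC ▸ hr)
  exact hB𝒞 (eq_of_subset_of_ncard_le hBC (by rw [hBr, h𝒞r C hC]) hCfin ▸ hC)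

lemma sparsePavingMatroid_spanning_insert (h𝒞E : ∀ C ∈ 𝒞, C ⊆ E) {C : Set α} {x : α}
    (hC : C ∈ 𝒞) (hx : x ∈ E \ C) : (sparsePavingMatroid hE hr h𝒞r h𝒞).Spanning (insert x C) := by
  obtain ⟨y, hy⟩ := nonempty_of_ncard_ne_zero ((h𝒞r C hC).trans_ne hr.ne')
  have hB : (sparsePavingMatroid hE hr h𝒞r h𝒞).IsBase (insert x (C \ {y})) :=
    sparsePavingMatroid_isBase_of_ncard_eq (insert_subset hx.1 (sdiff_subset.trans (h𝒞E C hC)))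
      ((ncard_exchange hx.2 hy).trans (h𝒞r C hC))
      (insert_sdiff_singleton_notMem hr h𝒞r h𝒞 hC hx.2 hy)
  exact hB.spanning_of_superset (insert_subset_insert sdiff_subset)
    (insert_subset hx.1 (h𝒞E C hC))

lemma sparsePavingMatroid_circuitHyperplane_of_mem (h𝒞E : ∀ C ∈ 𝒞, C ⊆ E)
    (hrE : r < E.ncard) {C : Set α} (hC : C ∈ 𝒞) :
    CircuitHyperplane (sparsePavingMatroid hE hr h𝒞r h𝒞) C := by
  set M := sparsePavingMatroid hE hr h𝒞r h𝒞
  have hCE : C ⊆ M.E := h𝒞E C hC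
  have hCfin : C.Finite := finite_of_ncard_pos (h𝒞r C hC ▸ hr)
  refine ⟨⟨⟨fun hCi => hCi.2.2 hC, hCE⟩, fun D hDC => ?_⟩, ?_, fun hCE' => ?_, fun F hF hCF => ?_⟩
  · have hDr : D.ncard < r := h𝒞r C hC ▸ ncard_lt_ncard hDC hCfin
    exact ⟨hDC.subset.trans hCE, hDr.le, fun hD => (h𝒞r D hD).not_lt hDr⟩
  · -- A point of `closure C` outside `C` would make `C` spanning.
    refine isFlat_iff_closure_eq.2 (subset_antisymm (fun x hx => ?_) (M.subset_closure C))
    by_contra hxC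
    refine sparsePavingMatroid_not_spanning hrE hC ⟨?_, hCE⟩
    rw [← closure_insert_eq_of_mem_closure hx]
    exact (sparsePavingMatroid_spanning_insert h𝒞E hC
      ⟨M.closure_subset_ground C hx, hxC⟩).closure_eq
  · have := ncard_le_ncard hCE'.ge hCfin
    rw [h𝒞r C hC] at this
    exact (this.trans_lt hrE).false
  · obtain ⟨x, hxF, hxC⟩ := exists_of_ssubset hCF
    have hFs : M.Spanning F := (sparsePavingMatroid_spanning_insert h𝒞E hC
      ⟨hF.subset_ground hxF, hxC⟩).superset (insert_subset hxF hCF.subset) hF.subset_ground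
    rw [← hF.closure, hFs.closure_eq]

lemma sparsePavingMatroid_mem_of_circuitHyperplane {S : Set α}
    (hS : CircuitHyperplane (sparsePavingMatroid hE hr h𝒞r h𝒞) S) : S ∈ 𝒞 := by
  obtain ⟨⟨hSd, hSmin⟩, hSflat, hSE, -⟩ := hS
  by_contra hS𝒞
  have hSr : r < S.ncard := by
    by_contra! h
    exact hSd.not_indep ⟨hSflat.subset_ground, h, hS𝒞⟩
  obtain ⟨B, hBS, hBr⟩ := exists_subset_card_eq hSr.le
  have hBi := hSmin B (hBS.ssubset_of_ne (by rintro rfl; omega))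
  have hB : (sparsePavingMatroid hE hr h𝒞r h𝒞).IsBase B :=
    sparsePavingMatroid_isBase_of_ncard_eq hBi.1 hBr hBi.2.2
  exact hSE (hSflat.closure ▸ (hB.spanning_of_superset hBS hSflat.subset_ground).closure_eq)

theorem exists_sparsePavingMatroid (hE : E.Finite) (hr : 0 < r) (h𝒞E : ∀ C ∈ 𝒞, C ⊆ E)
    (h𝒞r : ∀ C ∈ 𝒞, C.ncard = r) (h𝒞 : 𝒞.Pairwise fun C₁ C₂ => (C₁ ∩ C₂).ncard + 2 ≤ r)
    (hrE : r < E.ncard) :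
    ∃ M : Matroid α, M.E = E ∧ rank M = r ∧
      (∀ S ⊆ M.E, S.ncard = r → M.IsBase S ∨ CircuitHyperplane M S) ∧
      ∀ S, CircuitHyperplane M S ↔ S ∈ 𝒞 := by
  refine ⟨sparsePavingMatroid hE hr h𝒞r h𝒞, rfl, sparsePavingMatroid_rank hrE,
    fun S hSE hSr => ?_, fun S => ⟨sparsePavingMatroid_mem_of_circuitHyperplane,
      sparsePavingMatroid_circuitHyperplane_of_mem h𝒞E hrE⟩⟩
  by_cases hS : S ∈ 𝒞
  · exact Or.inr (sparsePavingMatroid_circuitHyperplane_of_mem h𝒞E hrE hS)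
  · exact Or.inl (sparsePavingMatroid_isBase_of_ncard_eq hSE hSr hS)

end SparsePaving

section Arcs

variable {n a l : ℕ}

def arc (n a l : ℕ) : Set ℕ := (fun k => (a + k) % n + 1) '' Iio l

lemma arc_subset_Icc (hn : 0 < n) : arc n a l ⊆ Icc 1 n := by
  rintro _ ⟨k, -, rfl⟩
  have := Nat.mod_lt (a + k) hn
  simp only [mem_Icc]
  omega

lemma arc_finite : (arc n a l).Finite := (finite_Iio l).image _

lemma disjoint_arc_pair (hn : 0 < n) : Disjoint (arc n a l) {n + 1, n + 2} :=
  disjoint_left.2 fun x hx hx' => by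
    have := arc_subset_Icc hn hx
    simp only [mem_Icc, mem_insert_iff, mem_singleton_iff] at this hx'
    omega

lemma ncard_arc (hl : l ≤ n) : (arc n a l).ncard = l := by
  refine (InjOn.ncard_image fun k hk k' hk' h => ?_).trans (ncard_Iio_nat l)
  simp only [mem_Iio] at hk hk'
  have h' : (a + k) % n = (a + k') % n := by simpa using h
  have := Nat.ModEq.add_left_cancel' a h'
  rwa [Nat.ModEq, Nat.mod_eq_of_lt (by omega), Nat.mod_eq_of_lt (by omega)] at this

lemma arc_union_arc_add {m : ℕ} (hm : m ≤ l) :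
    arc n a l ∪ arc n (a + m) l = arc n a (l + m) := by
  ext x
  simp only [arc, mem_union, mem_image, mem_Iio]
  constructor
  · rintro (⟨k, hk, rfl⟩ | ⟨k, hk, rfl⟩)
    · exact ⟨k, by omega, rfl⟩
    · exact ⟨m + k, by omega, by rw [add_assoc]⟩
  · rintro ⟨k, hk, rfl⟩
    rcases lt_or_ge k l with h | h
    · exact Or.inl ⟨k, h, rfl⟩
    · exact Or.inr ⟨k - m, by omega, by rw [add_assoc, Nat.add_sub_cancel' (by omega)]⟩

lemma ncard_arc_inter_arc_add_le {c : ℕ} (hl : l ≤ n) (hc : c < n) :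
    (arc n a l ∩ arc n (a + c) l).ncard ≤ (l - c) + (l + c - n) := by
  -- The `k`-th point of the first arc is the `k'`-th point of the second iff `k = c + k'` or,
  -- going once around the cycle, `k = c + k' - n`.
  have hsub : arc n a l ∩ arc n (a + c) l ⊆
      (fun k => (a + k) % n + 1) '' (Ico c l ∪ Iio (l + c - n)) := by
    rintro _ ⟨⟨k, hk, rfl⟩, k', hk', hkk'⟩
    simp only [mem_Iio] at hk hk'
    refine ⟨k, ?_, rfl⟩
    have h' : (a + (c + k')) % n = (a + k) % n := by rw [← add_assoc]; simpa using hkk'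
    have hmod := Nat.ModEq.add_left_cancel' a h'
    rw [Nat.ModEq, Nat.mod_eq_of_lt (show k < n by omega)] at hmod
    have hdiv := Nat.div_add_mod (c + k') n
    have hq : (c + k') / n < 2 := Nat.div_lt_of_lt_mul (show c + k' < n * 2 by omega)
    rw [hmod] at hdiv
    simp only [mem_union, mem_Ico, mem_Iio]
    obtain h | h := Nat.le_one_iff_eq_zero_or_eq_one.1 (Nat.le_of_lt_succ hq) <;>
      rw [h] at hdiv <;> omega
  calc (arc n a l ∩ arc n (a + c) l).ncard
      ≤ (Ico c l ∪ Iio (l + c - n)).ncard :=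
        (ncard_le_ncard hsub ((toFinite _).image _)).trans (ncard_image_le (toFinite _))
    _ ≤ (l - c) + (l + c - n) :=
        (ncard_union_le _ _).trans_eq (by rw [ncard_Ico_nat, ncard_Iio_nat])

lemma ncard_arc_inter_arc_le {t i j : ℕ} (hi : i ∈ Icc 1 t) (hj : j ∈ Icc 1 t) (hij : i ≠ j)
    (hl : l + 2 ≤ 2 * t) :
    (arc (2 * t) (2 * (i - 1)) l ∩ arc (2 * t) (2 * (j - 1)) l).ncard ≤ l - 2 := by
  wlog h : i < j generalizing i j
  · rw [inter_comm]
    exact this hj hi hij.symm (by omega)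
  simp only [mem_Icc] at hi hj
  rw [show 2 * (j - 1) = 2 * (i - 1) + 2 * (j - i) by omega]
  exact (ncard_arc_inter_arc_add_le (by omega) (by omega)).trans (by omega)

end Arcs

section Family

variable {r t : ℕ}

lemma Ci_eq_arc (i : ℕ) : Ci r t i = arc (2 * t) (2 * (i - 1)) (r - 2) := by
  ext x
  simp only [Ci, arc, mem_image, mem_Icc, mem_Iio]
  constructor
  · rintro ⟨k, hk, rfl⟩
    exact ⟨k - 1, by omega, by rw [show 2 * (i - 1) + (k - 1) = k + 2 * (i - 1) - 1 by omega]⟩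
  · rintro ⟨k, hk, rfl⟩
    exact ⟨k + 1, by omega, by rw [show k + 1 + 2 * (i - 1) - 1 = 2 * (i - 1) + k by omega]⟩

lemma CC'_eq :
    CC' r t = (fun i => arc (2 * t) (2 * (i - 1)) (r - 2) ∪ {2 * t + 1, 2 * t + 2}) '' Icc 1 t := by
  simp only [CC', Ci_eq_arc]

lemma CC''_eq (hr : 4 ≤ r) :
    CC'' r t = (fun i => arc (2 * t) (2 * (i - 1)) r) '' Icc 1 (t - 1) := by
  refine image_congr fun i ⟨hi, _⟩ => ?_
  rw [Ci_eq_arc, Ci_eq_arc, show 2 * (i + 1 - 1) = 2 * (i - 1) + 2 by omega,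
    arc_union_arc_add (by omega), Nat.sub_add_cancel (by omega)]

lemma subset_Icc_of_mem_CC (hr : 4 ≤ r) (ht : 0 < t) {S : Set ℕ}
    (hS : S ∈ CC' r t ∪ CC'' r t) : S ⊆ Icc 1 (2 * t + 2) := by
  have harc : ∀ a l, arc (2 * t) a l ⊆ Icc 1 (2 * t + 2) := fun a l =>
    (arc_subset_Icc (by omega)).trans (Icc_subset_Icc_right (by omega))
  rw [CC'_eq, CC''_eq hr] at hS
  rcases hS with ⟨i, -, rfl⟩ | ⟨i, -, rfl⟩
  · refine union_subset (harc _ _) (insert_subset ?_ (singleton_subset_iff.2 ?_)) <;>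
      simp only [mem_Icc] <;> omega
  · exact harc _ _

lemma ncard_of_mem_CC (hr : 4 ≤ r) (hrt : r ≤ 2 * t) {S : Set ℕ}
    (hS : S ∈ CC' r t ∪ CC'' r t) : S.ncard = r := by
  rw [CC'_eq, CC''_eq hr] at hS
  rcases hS with ⟨i, -, rfl⟩ | ⟨i, -, rfl⟩
  · rw [ncard_union_eq (disjoint_arc_pair (by omega)) arc_finite, ncard_arc (by omega),
      ncard_pair (by omega)]
    omega
  · exact ncard_arc hrt

lemma ncard_inter_le_of_mem_CC (hr : 4 ≤ r) (hrt : r + 2 ≤ 2 * t) {S₁ S₂ : Set ℕ}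
    (h₁ : S₁ ∈ CC' r t ∪ CC'' r t) (h₂ : S₂ ∈ CC' r t ∪ CC'' r t) (hne : S₁ ≠ S₂) :
    (S₁ ∩ S₂).ncard ≤ r - 2 := by
  have hmixed : ∀ a b,
      ((arc (2 * t) a (r - 2) ∪ {2 * t + 1, 2 * t + 2}) ∩ arc (2 * t) b r).ncard ≤ r - 2 :=
    fun a b => by
      rw [union_inter_distrib_right, (disjoint_arc_pair (by omega)).symm.inter_eq, union_empty]
      exact (ncard_inter_le_ncard_left _ _ arc_finite).trans (ncard_arc (by omega)).le
  rw [CC'_eq, CC''_eq hr] at h₁ h₂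
  rcases h₁ with ⟨i, hi, rfl⟩ | ⟨i, hi, rfl⟩ <;> rcases h₂ with ⟨j, hj, rfl⟩ | ⟨j, hj, rfl⟩
  · have hij : i ≠ j := by rintro rfl; exact hne rfl
    dsimp only
    rw [← inter_union_distrib_right]
    calc _ ≤ (arc (2 * t) (2 * (i - 1)) (r - 2) ∩ arc (2 * t) (2 * (j - 1)) (r - 2)).ncard + 2 :=
          (ncard_union_le _ _).trans_eq (by rw [ncard_pair (by omega)])
      _ ≤ r - 2 := by
          have := ncard_arc_inter_arc_le hi hj hij (l := r - 2) (by omega)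
          omega
  · exact hmixed _ _
  · rw [inter_comm]
    exact hmixed _ _
  · have hij : i ≠ j := by rintro rfl; exact hne rfl
    have hsub : Icc 1 (t - 1) ⊆ Icc 1 t := Icc_subset_Icc_right (Nat.sub_le t 1)
    exact ncard_arc_inter_arc_le (hsub hi) (hsub hj) hij hrt

end Family

theorem stmt7_general (r t : ℕ) (hr : 4 ≤ r) (hrt : r + 2 ≤ 2 * t) :
    (∀ S₁ ∈ CC' r t ∪ CC'' r t, ∀ S₂ ∈ CC' r t ∪ CC'' r t, S₁ ≠ S₂ →
      (S₁ ∩ S₂).ncard ≤ r - 2) ∧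
    ∃ K : Matroid ℕ, IsKrt r t K := by
  refine ⟨fun _ h₁ _ h₂ => ncard_inter_le_of_mem_CC hr hrt h₁ h₂,
    exists_sparsePavingMatroid (finite_Icc 1 (2 * t + 2)) (by omega)
      (fun _ => subset_Icc_of_mem_CC hr (by omega)) (fun _ => ncard_of_mem_CC hr (by omega))
      (fun _ h₁ _ h₂ hne => ?_) (by rw [ncard_Icc_nat]; omega)⟩
  have := ncard_inter_le_of_mem_CC hr hrt h₁ h₂ hne
  omega

/-- Any two distinct members of `𝒞'(r,t) ∪ 𝒞''(r,t)` intersect in at most `r - 2` elements,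
and consequently the matroid `K(r,t)` exists. -/
theorem stmt7 (r t : ℕ) (hr : 4 ≤ r) (ht : 3 ≤ t) (hrt : r + 2 ≤ 2 * t) :
    (∀ S₁ ∈ CC' r t ∪ CC'' r t, ∀ S₂ ∈ CC' r t ∪ CC'' r t, S₁ ≠ S₂ →
      (S₁ ∩ S₂).ncard ≤ r - 2) ∧
    ∃ K : Matroid ℕ, IsKrt r t K :=
  stmt7_general r t hr hrt

end PaperLift
end
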